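/- arXiv:1204.1127 — 4 statements merged into one kernel-verified Lean document; each statement's English description precedes it below -/
import Mathlib

section
/- Let u be a measurable function on a measure space with u*(t) ≤ N·t^{−1/p} for all t > 0 (where u* is the decreasing rearrangement, N ≥ 0, p > 1). Suppose also u*(t) ≤ N·e^{αR} for all t, where α, R > 0. Then ∫₀^{e^{2ρR}} u*(t)^p dt ≤ N^p · (1 + 2ρR + pαR) for any ρ > 0 and R > 1. -/
open MeasureTheory

theorem stmt_2 (ustar : ℝ → ℝ) (N p α ρ R : ℝ)
    (hN : 0 ≤ N) (hp : 1 < p) (hα : 0 < α) (hρ : 0 < ρ) (hR : 1 < R)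
    (hnonneg : ∀ t > 0, 0 ≤ ustar t)
    (h1 : ∀ t > 0, ustar t ≤ N * t ^ (-(1 / p)))
    (h2 : ∀ t > 0, ustar t ≤ N * Real.exp (α * R)) :
    ∫ t in (0)..(Real.exp (2 * ρ * R)), (ustar t) ^ p ≤
      N ^ p * (1 + 2 * ρ * R + p * α * R) := by
  have hR0 : (0:ℝ) < R := lt_trans one_pos hR
  have hp0 : (0:ℝ) < p := lt_trans one_pos hp
  set T : ℝ := Real.exp (2 * ρ * R) with hT
  set t₀ : ℝ := Real.exp (-(p * α * R)) with ht₀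
  have ht₀pos : 0 < t₀ := Real.exp_pos _
  have hTpos : 0 < T := Real.exp_pos _
  have hpar : 0 < p * α * R := by positivity
  have h2ρR : 0 < 2 * ρ * R := by positivity
  have ht₀T : t₀ ≤ T := Real.exp_le_exp.mpr (by linarith)
  have hRHS : 0 ≤ N ^ p * (1 + 2 * ρ * R + p * α * R) := by positivity
  by_cases hInt : IntervalIntegrable (fun t => ustar t ^ p) volume 0 T
  · have hi1 : IntervalIntegrable (fun t => ustar t ^ p) volume 0 t₀ :=
      hInt.mono_set (Set.uIcc_subset_uIcc Set.left_mem_uIcc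
        (by rw [Set.uIcc_of_le hTpos.le]; exact ⟨ht₀pos.le, ht₀T⟩))
    have hi2 : IntervalIntegrable (fun t => ustar t ^ p) volume t₀ T :=
      hInt.mono_set (Set.uIcc_subset_uIcc
        (by rw [Set.uIcc_of_le hTpos.le]; exact ⟨ht₀pos.le, ht₀T⟩) Set.right_mem_uIcc)
    have hsplit : ∫ t in (0)..T, ustar t ^ p
        = (∫ t in (0)..t₀, ustar t ^ p) + ∫ t in t₀..T, ustar t ^ p :=
      (intervalIntegral.integral_add_adjacent_intervals hi1 hi2).symm
    -- first piece
    have hA : ∫ t in (0)..t₀, ustar t ^ p ≤ N ^ p := by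
      have hconst : (N * Real.exp (α * R)) ^ p = N ^ p * Real.exp (p * α * R) := by
        rw [Real.mul_rpow hN (Real.exp_pos _).le]
        congr 1
        rw [← Real.exp_mul]
        ring_nf
      have hle : ∀ᵐ t ∂(volume.restrict (Set.Icc (0:ℝ) t₀)),
          ustar t ^ p ≤ N ^ p * Real.exp (p * α * R) := by
        rw [Measure.restrict_congr_set Ioc_ae_eq_Icc.symm,
          ae_restrict_iff' measurableSet_Ioc]
        filter_upwards with t ht
        rw [← hconst]
        exact Real.rpow_le_rpow (hnonneg t ht.1) (h2 t ht.1) hp0.le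
      calc ∫ t in (0)..t₀, ustar t ^ p
          ≤ ∫ _ in (0)..t₀, N ^ p * Real.exp (p * α * R) :=
            intervalIntegral.integral_mono_ae_restrict ht₀pos.le hi1
              intervalIntegrable_const hle
        _ = t₀ * (N ^ p * Real.exp (p * α * R)) := by
            rw [intervalIntegral.integral_const, smul_eq_mul, sub_zero]
        _ = N ^ p := by
            rw [ht₀, ← mul_assoc, mul_comm _ (N ^ p), mul_assoc,
              ← Real.exp_add, neg_add_cancel, Real.exp_zero, mul_one]
    -- second piece
    have hB : ∫ t in t₀..T, ustar t ^ p ≤ N ^ p * (2 * ρ * R + p * α * R) := by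
      have hgle : ∀ t ∈ Set.Icc t₀ T, ustar t ^ p ≤ N ^ p * t⁻¹ := by
        intro t ht
        have ht0 : 0 < t := lt_of_lt_of_le ht₀pos ht.1
        have : (N * t ^ (-(1/p))) ^ p = N ^ p * t⁻¹ := by
          rw [Real.mul_rpow hN (Real.rpow_nonneg ht0.le _), ← Real.rpow_mul ht0.le]
          congr 1
          rw [show -(1/p) * p = -1 by field_simp, Real.rpow_neg_one]
        rw [← this]
        exact Real.rpow_le_rpow (hnonneg t ht0) (h1 t ht0) hp0.le
      have hgInt : IntervalIntegrable (fun t => N ^ p * t⁻¹) volume t₀ T := by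
        apply IntervalIntegrable.const_mul
        apply intervalIntegral.intervalIntegrable_inv (f := fun x => x) ?_ continuousOn_id
        intro x hx
        rw [Set.uIcc_of_le ht₀T] at hx
        exact (lt_of_lt_of_le ht₀pos hx.1).ne'
      calc ∫ t in t₀..T, ustar t ^ p ≤ ∫ t in t₀..T, N ^ p * t⁻¹ :=
            intervalIntegral.integral_mono_on ht₀T hi2 hgInt hgle
        _ = N ^ p * Real.log (T / t₀) := by
            rw [intervalIntegral.integral_const_mul,
              integral_inv_of_pos ht₀pos hTpos]
        _ = N ^ p * (2 * ρ * R + p * α * R) := by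
            rw [Real.log_div hTpos.ne' ht₀pos.ne', hT, ht₀,
              Real.log_exp, Real.log_exp]
            ring
    rw [hsplit]
    nlinarith [hA, hB]
  · rw [intervalIntegral.integral_undef hInt]
    exact hRHS
end

section
/- Let V be a normed vector space over ℂ, A : V → V a linear map, c > 0 a real number, and g ∈ V with (A + c·I)² g = 0. If there exists M > 0 such that ‖A^k g‖ ≤ M·c^k for all positive integers k, then (A + c·I) g = 0. -/
theorem stmt_6 {V : Type*} [NormedAddCommGroup V] [NormedSpace ℂ V]
    (A : Module.End ℂ V) (c : ℝ) (hc : 0 < c) (g : V)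
    (hg : ((A + (c : ℂ) • (1 : Module.End ℂ V)) ^ 2) g = 0)
    (hM : ∃ M > 0, ∀ k : ℕ, 1 ≤ k → ‖(A ^ k) g‖ ≤ M * c ^ k) :
    (A + (c : ℂ) • (1 : Module.End ℂ V)) g = 0 := by
  obtain ⟨M, hMpos, hMb⟩ := hM
  set L := A + (c : ℂ) • (1 : Module.End ℂ V) with hL
  set w := L g with hw
  have hLw : L w = 0 := by
    have : (L ^ 2) g = L (L g) := by simp [sq, Module.End.mul_apply]
    rw [hw, ← this, hg]
  have hAL : A = L - (c:ℂ) • 1 := by rw [hL]; abel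
  have hAg : A g = (-(c:ℂ)) • g + w := by
    rw [hAL]
    simp [LinearMap.sub_apply, LinearMap.smul_apply, Module.End.one_apply, hw, neg_smul]
    abel
  have hAw : A w = (-(c:ℂ)) • w := by
    rw [hAL]
    simp [LinearMap.sub_apply, LinearMap.smul_apply, Module.End.one_apply, hLw, neg_smul]
  -- key identity
  have key : ∀ k : ℕ, 1 ≤ k →
      (A ^ k) g = ((-(c:ℂ)) ^ k) • g + ((k : ℂ) * (-(c:ℂ)) ^ (k - 1)) • w := by
    intro k hk
    induction k with
    | zero => omega
    | succ n ih =>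
      rcases Nat.eq_or_lt_of_le hk with h1 | h1
      · simp [← h1, hAg]
      · have hn : 1 ≤ n := by omega
        obtain ⟨m, rfl⟩ : ∃ m, n = m + 1 := ⟨n - 1, by omega⟩
        have := ih hn
        have step : (A ^ (m + 1 + 1)) g = A ((A ^ (m + 1)) g) := by
          rw [pow_succ']; simp [Module.End.mul_apply]
        rw [step, this, map_add, map_smul, map_smul, hAg, hAw]
        simp only [Nat.add_sub_cancel]
        push_cast
        module
  -- norm bound
  have bound : ∀ k : ℕ, 1 ≤ k → (k : ℝ) * c ^ (k - 1) * ‖w‖ ≤ (M + ‖g‖) * c ^ k := by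
    intro k hk
    have hkey := key k hk
    have : ((k : ℂ) * (-(c:ℂ)) ^ (k - 1)) • w = (A ^ k) g - ((-(c:ℂ)) ^ k) • g := by
      rw [hkey]; abel
    have hnorm : ‖((k : ℂ) * (-(c:ℂ)) ^ (k - 1)) • w‖ ≤ M * c ^ k + c ^ k * ‖g‖ := by
      rw [this]
      calc ‖(A ^ k) g - ((-(c:ℂ)) ^ k) • g‖ ≤ ‖(A ^ k) g‖ + ‖((-(c:ℂ)) ^ k) • g‖ :=
            norm_sub_le _ _
        _ ≤ M * c ^ k + c ^ k * ‖g‖ := by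
            apply add_le_add (hMb k hk)
            rw [norm_smul, norm_pow, norm_neg, Complex.norm_real,
              Real.norm_of_nonneg hc.le]
    rw [norm_smul, norm_mul, norm_pow, norm_neg, Complex.norm_real,
      Real.norm_of_nonneg hc.le, Complex.norm_natCast] at hnorm
    calc (k : ℝ) * c ^ (k - 1) * ‖w‖ ≤ M * c ^ k + c ^ k * ‖g‖ := hnorm
      _ = (M + ‖g‖) * c ^ k := by ring
  -- conclude w = 0
  by_contra hne
  have hwpos : 0 < ‖w‖ := norm_pos_iff.mpr hne
  obtain ⟨n, hn⟩ := exists_nat_gt ((M + ‖g‖) * c / ‖w‖)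
  have hn1 : 1 ≤ n + 1 := le_add_self
  have hb := bound (n + 1) hn1
  have hsimp : (n + 1 : ℕ) - 1 = n := by omega
  rw [hsimp] at hb
  have hcpow : 0 < c ^ n := pow_pos hc n
  have hlt : ((n + 1 : ℕ) : ℝ) * ‖w‖ ≤ (M + ‖g‖) * c := by
    have := hb
    rw [pow_succ] at this
    nlinarith
  have hMg : 0 < M + ‖g‖ := by positivity
  have : ((n + 1 : ℕ) : ℝ) ≤ (M + ‖g‖) * c / ‖w‖ := by
    rw [le_div_iff₀ hwpos]; linarith
  have : ((n : ℝ) + 1) ≤ (M + ‖g‖) * c / ‖w‖ := by push_cast at this ⊢; linarith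
  linarith
end

section
/- Let V be a normed vector space over ℂ, A : V → V a linear map, c > 0, N a nonnegative integer, and T ∈ V such that (A + c·I)^{N+1} T = 0 and ‖A^k T‖ ≤ M·c^k for all integers k ≥ 0 and some M > 0. Then (A + c·I) T = 0. -/
/-!
Write `B = A + c` and `μ = -c`, so that `‖μ‖ = c`. If `B² g = 0` and `h = B g`, then `A h = μ h` and
`A^(n+1) g = μ^(n+1) g + (n+1) μ^n h`; the growth bound `‖A^k g‖ ≤ M' c^k` then forces
`(n+1) ‖h‖ ≤ c (M' + ‖g‖)` for every `n`, hence `h = 0`. The growth bound passes from `T` to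
every `B^j T`, so applying this to `g = B^m T` lowers the exponent in `B^(N+1) T = 0` one step at
a time, down to `B T = 0`.
-/

open Module

namespace Module.End

section Algebra

variable {R M : Type*} [CommRing R] [AddCommGroup M] [Module R M]

theorem pow_succ_apply_of_sq_sub_smul_apply_eq_zero (A : End R M) (μ : R) {g : M}
    (hg : ((A - μ • 1) ^ 2 : End R M) g = 0) (n : ℕ) :
    (A ^ (n + 1)) g = μ ^ (n + 1) • g + ((n + 1 : R) * μ ^ n) • (A - μ • 1) g := by
  set h := (A - μ • 1) g
  have hAg : A g = μ • g + h := by simp [h]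
  have hAh : A h = μ • h := by
    have : (A - μ • 1) h = 0 := by rwa [pow_two, Module.End.mul_apply] at hg
    simpa [sub_eq_zero] using this
  induction n with
  | zero => simp [hAg]
  | succ n ih =>
    rw [pow_succ', Module.End.mul_apply, ih, map_add, map_smul, map_smul, hAg, hAh]
    push_cast
    module

theorem apply_eq_zero_of_pow_succ_apply_eq_zero (B : End R M) {S : Submodule R M}
    (hBS : ∀ x ∈ S, B x ∈ S) (hker : ∀ y ∈ S, (B ^ 2) y = 0 → B y = 0)
    {x : M} (hx : x ∈ S) (n : ℕ) (hn : (B ^ (n + 1)) x = 0) : B x = 0 := by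
  have hpow : ∀ m, (B ^ m) x ∈ S := fun m => by
    induction m with
    | zero => simpa using hx
    | succ m ih => rw [pow_succ', Module.End.mul_apply]; exact hBS _ ih
  induction n with
  | zero => simpa using hn
  | succ n ih =>
    refine ih ?_
    rw [pow_succ', Module.End.mul_apply]
    refine hker _ (hpow n) ?_
    rwa [← Module.End.mul_apply, ← pow_add, add_comm]

end Algebra

section Growth

variable {𝕜 V : Type*} [RCLike 𝕜] [NormedAddCommGroup V] [NormedSpace 𝕜 V]

def orbitGrowthLE (A : End 𝕜 V) (r : ℝ) : Submodule 𝕜 V where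
  carrier := {x | ∃ C, ∀ k, ‖(A ^ k) x‖ ≤ C * r ^ k}
  zero_mem' := ⟨0, fun k => by simp⟩
  add_mem' := by
    rintro x y ⟨C, hC⟩ ⟨D, hD⟩
    refine ⟨C + D, fun k => ?_⟩
    calc ‖(A ^ k) (x + y)‖ ≤ ‖(A ^ k) x‖ + ‖(A ^ k) y‖ := by
          rw [map_add]; exact norm_add_le _ _
      _ ≤ C * r ^ k + D * r ^ k := add_le_add (hC k) (hD k)
      _ = (C + D) * r ^ k := by ring
  smul_mem' := by
    rintro a x ⟨C, hC⟩
    refine ⟨‖a‖ * C, fun k => ?_⟩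
    rw [map_smul, norm_smul, mul_assoc]
    exact mul_le_mul_of_nonneg_left (hC k) (norm_nonneg a)

theorem apply_mem_orbitGrowthLE {A : End 𝕜 V} {r : ℝ} {x : V} (hx : x ∈ orbitGrowthLE A r) :
    A x ∈ orbitGrowthLE A r := by
  obtain ⟨C, hC⟩ := hx
  refine ⟨C * r, fun k => ?_⟩
  rw [← Module.End.mul_apply, ← pow_succ]
  calc ‖(A ^ (k + 1)) x‖ ≤ C * r ^ (k + 1) := hC (k + 1)
    _ = C * r * r ^ k := by ring

theorem sub_smul_apply_mem_orbitGrowthLE {A : End 𝕜 V} {r : ℝ} (μ : 𝕜) {x : V}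
    (hx : x ∈ orbitGrowthLE A r) : (A - μ • 1) x ∈ orbitGrowthLE A r := by
  simpa using Submodule.sub_mem _ (apply_mem_orbitGrowthLE hx) (Submodule.smul_mem _ μ hx)

theorem sub_smul_apply_eq_zero_of_sq {A : End 𝕜 V} {μ : 𝕜} (hμ : μ ≠ 0) {g : V}
    (hg : g ∈ orbitGrowthLE A ‖μ‖) (hsq : ((A - μ • 1) ^ 2 : End 𝕜 V) g = 0) : (A - μ • 1) g = 0 := by
  obtain ⟨C, hC⟩ := hg
  set h := (A - μ • 1) g
  have hμpos : 0 < ‖μ‖ := norm_pos_iff.mpr hμ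
  have hlin : ∀ n : ℕ, (n + 1 : ℝ) * ‖h‖ ≤ ‖μ‖ * (C + ‖g‖) := fun n => by
    have hsplit : ((n + 1 : 𝕜) * μ ^ n) • h = (A ^ (n + 1)) g - μ ^ (n + 1) • g := by
      rw [pow_succ_apply_of_sq_sub_smul_apply_eq_zero A μ hsq n]; abel
    have hnorm : ‖((n + 1 : 𝕜) * μ ^ n) • h‖ = ‖μ‖ ^ n * ((n + 1 : ℝ) * ‖h‖) := by
      rw [norm_smul, norm_mul, norm_pow, show (n + 1 : 𝕜) = ((n + 1 : ℕ) : 𝕜) by push_cast; ring,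
        RCLike.norm_natCast]
      push_cast; ring
    have hbound : ‖μ‖ ^ n * ((n + 1 : ℝ) * ‖h‖) ≤ ‖μ‖ ^ n * (‖μ‖ * (C + ‖g‖)) :=
      calc ‖μ‖ ^ n * ((n + 1 : ℝ) * ‖h‖)
          = ‖(A ^ (n + 1)) g - μ ^ (n + 1) • g‖ := by rw [← hnorm, hsplit]
        _ ≤ ‖(A ^ (n + 1)) g‖ + ‖μ ^ (n + 1) • g‖ := norm_sub_le _ _
        _ ≤ C * ‖μ‖ ^ (n + 1) + ‖μ‖ ^ (n + 1) * ‖g‖ := by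
          rw [norm_smul, norm_pow]; exact add_le_add_left (hC (n + 1)) _
        _ = ‖μ‖ ^ n * (‖μ‖ * (C + ‖g‖)) := by ring
    exact le_of_mul_le_mul_left hbound (pow_pos hμpos n)
  by_contra hne
  have hhpos : 0 < ‖h‖ := norm_pos_iff.mpr hne
  obtain ⟨n, hn⟩ := exists_nat_gt (‖μ‖ * (C + ‖g‖) / ‖h‖)
  rw [div_lt_iff₀ hhpos] at hn
  linarith [hlin n]

end Growth

end Module.End

open Module.End in
theorem stmt_7 {V : Type*} [NormedAddCommGroup V] [NormedSpace ℂ V]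
    (A : Module.End ℂ V) (c : ℝ) (hc : 0 < c) (N : ℕ) (T : V)
    (hT : ((A + (c : ℂ) • (1 : Module.End ℂ V)) ^ (N + 1)) T = 0)
    (hM : ∃ M > 0, ∀ k : ℕ, ‖(A ^ k) T‖ ≤ M * c ^ k) :
    (A + (c : ℂ) • (1 : Module.End ℂ V)) T = 0 := by
  have hB : A + (c : ℂ) • (1 : Module.End ℂ V) = A - (-(c : ℂ)) • 1 := by
    rw [neg_smul, sub_neg_eq_add]
  have hμ : ‖-(c : ℂ)‖ = c := by simp [hc.le]
  have hμ0 : -(c : ℂ) ≠ 0 := by simpa using hc.ne'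
  obtain ⟨M, -, hMT⟩ := hM
  have hTmem : T ∈ orbitGrowthLE A ‖-(c : ℂ)‖ := ⟨M, by rwa [hμ]⟩
  rw [hB] at hT ⊢
  exact apply_eq_zero_of_pow_succ_apply_eq_zero _ (fun x hx => sub_smul_apply_mem_orbitGrowthLE _ hx)
    (fun y hy => sub_smul_apply_eq_zero_of_sq hμ0 hy) hTmem N hT
end

section
/- Let ρ > 0 and 1 ≤ q < ∞. The function f(t) = e^{−ρt} does not belong to the Lorentz space L^{2,q} of the measure space ((1,∞), e^{2ρt} dt); that is, ∫₀^∞ (f*(t)·t^{1/2})^q dt/t = ∞, where f* is the decreasing rearrangement of f with respect to the measure e^{2ρt} dt. -/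
open MeasureTheory Set

/-- The decreasing rearrangement of `f` with respect to the measure `μ`:
`f*(t) = inf { s ≥ 0 : μ({x : |f(x)| > s}) ≤ t }`. -/
noncomputable def rearrangement {M : Type*} [MeasurableSpace M] (μ : Measure M)
    (f : M → ℝ) (t : ℝ) : ℝ :=
  sInf {s : ℝ | 0 ≤ s ∧ μ {x | s < |f x|} ≤ ENNReal.ofReal t}

/-! On `(1, ∞)` with the weight `e^{2ρx}`, the superlevel set `{e^{-ρx} > s}` of `f` contains an
interval of length one on which the weight is at least `e^{-2ρ} / s²`. Hence `f*(t) ≥ e^{-ρ} / √t`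
for large `t`, so `(f*(t) t^{1/2})^q / t ≥ e^{-ρq} / t`, which is not integrable at infinity. -/

lemma lintegral_ofReal_inv_Ioi_eq_top {T : ℝ} (hT : 0 ≤ T) :
    ∫⁻ t in Ioi T, ENNReal.ofReal t⁻¹ = ⊤ := by
  have hnonneg : 0 ≤ᵐ[volume.restrict (Ioi T)] fun t : ℝ => t⁻¹ :=
    (ae_restrict_mem measurableSet_Ioi).mono fun t ht => inv_nonneg.2 (hT.trans ht.le)
  by_contra h
  exact not_integrableOn_Ioi_inv ⟨measurable_inv.aestronglyMeasurable,
    (hasFiniteIntegral_iff_ofReal hnonneg).2 (lt_top_iff_ne_top.2 h)⟩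

lemma le_rearrangement {M : Type*} [MeasurableSpace M] {μ : Measure M} {f : M → ℝ}
    {t s₀ C : ℝ} (hC : ∀ᵐ x ∂μ, |f x| ≤ C)
    (hlevel : ∀ s, 0 < s → s < s₀ → ENNReal.ofReal t < μ {x | s < |f x|}) :
    s₀ ≤ rearrangement μ f t := by
  have hC_mem : max C 0 ∈ {s : ℝ | 0 ≤ s ∧ μ {x | s < |f x|} ≤ ENNReal.ofReal t} := by
    refine ⟨le_max_right C 0, le_of_eq_of_le ?_ zero_le⟩
    exact measure_eq_zero_iff_ae_notMem.2 <|
      hC.mono fun x hx => not_lt.2 (hx.trans (le_max_left C 0))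
  refine le_csInf ⟨_, hC_mem⟩ ?_
  rintro s ⟨hs, hμs⟩
  by_contra! hlt
  -- `hlevel` only covers positive levels, and `s` may be `0`
  have hmid := hlevel ((s + s₀) / 2) (by linarith) (by linarith)
  have hsub : {x | (s + s₀) / 2 < |f x|} ⊆ {x | s < |f x|} := fun x hx => by
    simp only [mem_ofPred_eq] at hx ⊢; linarith
  exact (hmid.trans_le (measure_mono hsub)).not_ge hμs

noncomputable abbrev expWeight (ρ : ℝ) : Measure ℝ :=
  (volume.restrict (Ioi (1 : ℝ))).withDensity fun s => ENNReal.ofReal (Real.exp (2 * ρ * s))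

lemma ofReal_exp_le_expWeight_Ioo {ρ b : ℝ} (hρ : 0 ≤ ρ) (hb : 1 ≤ b) :
    ENNReal.ofReal (Real.exp (2 * ρ * b)) ≤ expWeight ρ (Ioo b (b + 1)) := by
  rw [withDensity_apply _ measurableSet_Ioo, Measure.restrict_restrict measurableSet_Ioo,
    inter_eq_left.2 (Ioo_subset_Ioi_self.trans (Ioi_subset_Ioi hb))]
  calc ENNReal.ofReal (Real.exp (2 * ρ * b))
      = ∫⁻ _ in Ioo b (b + 1), ENNReal.ofReal (Real.exp (2 * ρ * b)) := by
        simp [Real.volume_Ioo]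
    _ ≤ ∫⁻ x in Ioo b (b + 1), ENNReal.ofReal (Real.exp (2 * ρ * x)) :=
        setLIntegral_mono' measurableSet_Ioo fun x hx =>
          ENNReal.ofReal_le_ofReal (Real.exp_le_exp.2 (by nlinarith [hx.1]))

lemma ofReal_le_expWeight_superlevel {ρ s : ℝ} (hρ : 0 < ρ) (hs : 0 < s)
    (hs_le : s ≤ Real.exp (-(2 * ρ))) :
    ENNReal.ofReal (Real.exp (-(2 * ρ)) / s ^ 2) ≤
      expWeight ρ {x | s < |Real.exp (-ρ * x)|} := by
  set a := -Real.log s / ρ with ha_def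
  have hs_eq : s = Real.exp (-ρ * a) := by
    rw [ha_def, show -ρ * (-Real.log s / ρ) = Real.log s by field_simp, Real.exp_log hs]
  have ha : 2 ≤ a := by
    rw [ha_def, le_div_iff₀ hρ]
    linarith [(Real.log_le_log hs hs_le).trans_eq (Real.log_exp _)]
  have hweight : Real.exp (-(2 * ρ)) / s ^ 2 = Real.exp (2 * ρ * (a - 1)) := by
    rw [hs_eq, ← Real.exp_nat_mul, ← Real.exp_sub]
    ring_nf
  have hsub : Ioo (a - 1) (a - 1 + 1) ⊆ {x | s < |Real.exp (-ρ * x)|} := fun x hx => by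
    rw [mem_ofPred_eq, abs_of_pos (Real.exp_pos _), hs_eq, Real.exp_lt_exp]
    nlinarith [hx.2]
  rw [hweight]
  exact (ofReal_exp_le_expWeight_Ioo hρ.le (by linarith)).trans (measure_mono hsub)

lemma exp_neg_le_rearrangement_mul_rpow {ρ t : ℝ} (hρ : 0 < ρ) (ht : Real.exp (2 * ρ) ≤ t) :
    Real.exp (-ρ) ≤
      rearrangement (expWeight ρ) (fun s => Real.exp (-ρ * s)) t * t ^ ((1 : ℝ) / 2) := by
  have ht0 : 0 < t := (Real.exp_pos _).trans_le ht
  have hsqrt : 0 < √t := Real.sqrt_pos.2 ht0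
  rw [← Real.sqrt_eq_rpow, ← div_le_iff₀ hsqrt]
  have hbounded : ∀ᵐ x ∂expWeight ρ, |Real.exp (-ρ * x)| ≤ 1 := by
    refine (withDensity_absolutelyContinuous _ _).ae_le ?_
    filter_upwards [ae_restrict_mem measurableSet_Ioi] with x hx
    rw [abs_of_pos (Real.exp_pos _), Real.exp_le_one_iff]
    nlinarith [mem_Ioi.1 hx]
  refine le_rearrangement hbounded fun s hs hs_lt => ?_
  have hst : √t * s < Real.exp (-ρ) := by rwa [lt_div_iff₀' hsqrt] at hs_lt
  have hs_le : s ≤ Real.exp (-(2 * ρ)) := by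
    have : Real.exp ρ ≤ √t := by
      rw [Real.le_sqrt (Real.exp_pos _).le ht0.le, ← Real.exp_nat_mul]; simpa using ht
    rw [show -(2 * ρ) = -ρ - ρ by ring, Real.exp_sub]
    exact (le_div_iff₀ (Real.exp_pos _)).2 (by nlinarith)
  refine lt_of_lt_of_le ?_ (ofReal_le_expWeight_superlevel hρ hs hs_le)
  refine (ENNReal.ofReal_lt_ofReal_iff (by positivity)).2 ((lt_div_iff₀ (by positivity)).2 ?_)
  have hsq : (√t * s) ^ 2 < Real.exp (-ρ) ^ 2 := pow_lt_pow_left₀ hst (by positivity) two_ne_zero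
  rw [mul_pow, Real.sq_sqrt ht0.le, ← Real.exp_nat_mul] at hsq
  simpa [neg_mul] using hsq

theorem stmt_14 (ρ q : ℝ) (hρ : 0 < ρ) (hq1 : 1 ≤ q) :
    ∫⁻ t in Set.Ioi (0 : ℝ),
        ENNReal.ofReal
          ((rearrangement
              ((volume.restrict (Set.Ioi (1 : ℝ))).withDensity
                (fun s => ENNReal.ofReal (Real.exp (2 * ρ * s))))
              (fun s => Real.exp (-ρ * s)) t * t ^ ((1 : ℝ) / 2)) ^ q / t)
      = ⊤ := by
  set T := Real.exp (2 * ρ)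
  have hbound : ∀ t ∈ Ioi T, ENNReal.ofReal (Real.exp (-ρ) ^ q) * ENNReal.ofReal t⁻¹ ≤
      ENNReal.ofReal ((rearrangement (expWeight ρ) (fun s => Real.exp (-ρ * s)) t *
        t ^ ((1 : ℝ) / 2)) ^ q / t) := fun t ht => by
    have ht0 : 0 < t := (Real.exp_pos _).trans ht
    rw [← ENNReal.ofReal_mul (by positivity), div_eq_mul_inv]
    exact ENNReal.ofReal_le_ofReal <| mul_le_mul_of_nonneg_right (Real.rpow_le_rpow
      (Real.exp_pos _).le (exp_neg_le_rearrangement_mul_rpow hρ (le_of_lt ht)) (by linarith))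
      (inv_nonneg.2 ht0.le)
  rw [eq_top_iff]
  calc ⊤ = ∫⁻ t in Ioi T, ENNReal.ofReal (Real.exp (-ρ) ^ q) * ENNReal.ofReal t⁻¹ := by
        rw [lintegral_const_mul _ measurable_inv.ennreal_ofReal,
          lintegral_ofReal_inv_Ioi_eq_top (Real.exp_pos _).le, ENNReal.mul_top]
        exact (ENNReal.ofReal_pos.2 (by positivity)).ne'
    _ ≤ _ := setLIntegral_mono' measurableSet_Ioi hbound
    _ ≤ _ := lintegral_mono_set (Ioi_subset_Ioi (Real.exp_pos _).le)
end
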